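/- arXiv:2301.12182 — 2 statements merged into one kernel-verified Lean document; each statement's English description precedes it below -/
import Mathlib

section
/- Let n ∈ ℤ^d_{>0} be a velocity vector and let Z_n := [0,e_1] + ... + [0,e_d] + [0,n] be the lonely runner zonotope. Then max_{1≤i≤d} n_i ≤ #(int(Z_n) ∩ ℤ^d) ≤ Σ_{i=1}^d n_i. Moreover, if max_{1≤i≤d} n_i ≥ Φ(d), where Φ(d) := Σ_{ℓ=1}^d φ(ℓ), then #(int(Z_n) ∩ ℤ^d) ≥ #(int(Z_{ℓ_d}) ∩ ℤ^d), where ℓ_d := (1,2,...,d). -/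
open Pointwise

/-- A point of `ℝ^d` all of whose coordinates are integers. -/
def IsLatticePoint {d : ℕ} (x : Fin d → ℝ) : Prop := ∀ i, ∃ z : ℤ, x i = (z : ℝ)

/-!
The interior of `Z_v = [0,1]^d + [0,v]` is `(0,1)^d + [0,v]`, so an integer point `z` lies in it
iff some time `t ∈ [0,1]` has `z i - 1 < t * v i < z i` for all `i`. Such a `z` is recovered from
`q = min_i z i / v i` as `z i = ⌈q * v i⌉`, and `q` ranges exactly over the times `k / v i`,
`1 ≤ k ≤ v i`, at which some runner is at an integer. Hence the interior lattice points are
counted by the distinct fractions `k / v i`: there are at least `v i` of them for each `i`, at most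
`∑ i, v i`, and for `v = (1, …, d)` they are reduced fractions `a / b` with `b ≤ d`, of which
there are `Φ(d)`.
-/

open Set Topology

theorem Convex.interior_add_eq_of_interior_nonempty {E : Type*} [AddCommGroup E] [Module ℝ E]
    [TopologicalSpace E] [IsTopologicalAddGroup E] [ContinuousSMul ℝ E] {K L : Set E}
    (hK : Convex ℝ K) (hL : Convex ℝ L) (hKi : (interior K).Nonempty) :
    interior (K + L) = interior K + L := by
  -- Push `x` away from a point `k₀ + l₀` of `interior K + L` while staying in `K + L`; then `x`
  -- is a proper convex combination of `k₀ + l₀` and that point.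
  refine subset_antisymm (fun x hx => ?_)
    (interior_maximal (add_subset_add_right interior_subset) isOpen_interior.add_right)
  obtain ⟨k₀, hk₀⟩ := hKi
  obtain ⟨-, -, l₀, hl₀, -⟩ := interior_subset hx
  obtain ⟨δ, ⟨k, hk, l, hl, hkl⟩, hδ : 1 < δ⟩ :=
    (((eventually_homothety_mem_of_mem_interior ℝ (k₀ + l₀) hx).filter_mono
      nhdsWithin_le_nhds).and (self_mem_nhdsWithin (s := Ioi 1))).exists
  have hδ₀ : 0 < δ := one_pos.trans hδ
  have hδ₁ : δ⁻¹ < 1 := inv_lt_one_of_one_lt₀ hδ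
  refine ⟨(1 - δ⁻¹) • k₀ + δ⁻¹ • k,
    hK.combo_interior_self_mem_interior hk₀ hk (by linarith) (by positivity) (by ring),
    (1 - δ⁻¹) • l₀ + δ⁻¹ • l, hL hl₀ hl (by linarith) (by positivity) (by ring), ?_⟩
  rw [AffineMap.homothety_apply, vsub_eq_sub, vadd_eq_add] at hkl
  calc (1 - δ⁻¹) • k₀ + δ⁻¹ • k + ((1 - δ⁻¹) • l₀ + δ⁻¹ • l)
      = (1 - δ⁻¹) • (k₀ + l₀) + δ⁻¹ • (k + l) := by module
    _ = x := by
      rw [show k + l = _ from hkl, smul_add δ⁻¹, smul_smul, inv_mul_cancel₀ hδ₀.ne']; module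

section Zonotope

variable {ι : Type*} [Fintype ι] [DecidableEq ι]

theorem sum_segment_single_eq_pi_Icc :
    ∑ j, segment ℝ (0 : ι → ℝ) (Pi.single j 1) = univ.pi fun _ => Icc 0 1 := by
  have hseg (j : ι) (y : ι → ℝ) :
      y ∈ segment ℝ 0 (Pi.single j 1) ↔ ∃ t ∈ Icc (0 : ℝ) 1, Pi.single j t = y := by
    simp [segment_eq_image, ← Pi.single_smul]
  ext x
  simp only [mem_fintype_sum, hseg, Set.mem_univ_pi]
  constructor
  · rintro ⟨g, hg, rfl⟩ i
    choose t ht hgt using hg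
    simp [← hgt, Finset.sum_apply, Pi.single_apply, ht i]
  · intro hx
    exact ⟨fun j => Pi.single j (x j), fun j => ⟨x j, hx j, rfl⟩, Finset.univ_sum_single x⟩

theorem interior_sum_segment_single_add_segment (v : ι → ℝ) :
    interior ((∑ j, segment ℝ (0 : ι → ℝ) (Pi.single j 1)) + segment ℝ 0 v) =
      {x | ∃ t ∈ Icc (0 : ℝ) 1, ∀ i, x i - t * v i ∈ Ioo 0 1} := by
  have hcube : interior (univ.pi fun _ : ι => Icc (0 : ℝ) 1) = univ.pi fun _ => Ioo 0 1 := by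
    rw [interior_pi_set finite_univ]
    simp
  rw [sum_segment_single_eq_pi_Icc, Convex.interior_add_eq_of_interior_nonempty
    (convex_pi fun _ _ => convex_Icc 0 1) (convex_segment 0 v)
    (hcube ▸ ⟨fun _ => 1 / 2, by simp; norm_num⟩), hcube]
  ext x
  simp only [Set.mem_add, segment_eq_image, Set.mem_univ_pi]
  constructor
  · rintro ⟨c, hc, _, ⟨t, ht, rfl⟩, rfl⟩
    exact ⟨t, ht, fun i => by simpa using hc i⟩
  · rintro ⟨t, ht, hx⟩
    exact ⟨x - t • v, fun i => hx i, t • v, ⟨t, ht, by simp⟩, by abel⟩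

end Zonotope

theorem Rat.card_le_sum_totient {s : Finset ℚ} {d : ℕ}
    (hs : ∀ q ∈ s, q ∈ Ioc 0 1 ∧ q.den ≤ d) : s.card ≤ ∑ ℓ ∈ Finset.Icc 1 d, ℓ.totient := by
  set T := (Finset.Icc 1 d).sigma fun b => (Finset.Ico 1 (1 + b)).filter fun a => b.Coprime a
  have hsub : s ⊆ T.image fun p => (p.2 : ℚ) / p.1 := by
    intro q hq
    obtain ⟨⟨hq₀, hq₁⟩, hden⟩ := hs q hq
    have hnum : 0 < q.num := Rat.num_pos.2 hq₀
    have hnum_le : q.num ≤ q.den := Rat.num_le_denom_iff.2 hq₁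
    have hnat : (q.num.natAbs : ℤ) = q.num := Int.natAbs_of_nonneg hnum.le
    have hmem : (⟨q.den, q.num.natAbs⟩ : Σ _ : ℕ, ℕ) ∈ T := by
      simp only [T, Finset.mem_sigma, Finset.mem_Icc, Finset.mem_filter, Finset.mem_Ico]
      exact ⟨⟨q.den_pos, hden⟩, ⟨by omega, by omega⟩, q.reduced.symm⟩
    refine Finset.mem_image.2 ⟨_, hmem, ?_⟩
    conv_rhs => rw [← Rat.num_div_den q]
    exact congrArg (· / (q.den : ℚ)) ((Int.cast_natCast _).symm.trans (congrArg Int.cast hnat))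
  calc s.card ≤ (T.image fun p => (p.2 : ℚ) / p.1).card := Finset.card_le_card hsub
    _ ≤ T.card := Finset.card_image_le
    _ = ∑ ℓ ∈ Finset.Icc 1 d, ℓ.totient := by
      rw [Finset.card_sigma]
      exact Finset.sum_congr rfl fun b _ => Nat.filter_coprime_Ico_eq_totient b 1

namespace LonelyRunner

variable {ι : Type*}

def interiorPoints (v : ι → ℤ) : Set (ι → ℤ) :=
  {z | ∃ t ∈ Icc (0 : ℝ) 1, ∀ i, (z i : ℝ) - t * v i ∈ Ioo 0 1}

def ceilPoint (v : ι → ℤ) (q : ℚ) : ι → ℤ :=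
  fun i => ⌈q * v i⌉

variable {v : ι → ℤ}

theorem mem_Icc_of_mem_interiorPoints (hv : ∀ i, 0 ≤ v i) {z : ι → ℤ}
    (hz : z ∈ interiorPoints v) (i : ι) : z i ∈ Finset.Icc 1 (v i) := by
  obtain ⟨t, ⟨ht₀, ht₁⟩, hzt⟩ := hz
  have hvi : (0 : ℝ) ≤ v i := by exact_mod_cast hv i
  have hlo : (0 : ℝ) < z i := by nlinarith [(hzt i).1]
  have hhi : (z i : ℝ) < v i + 1 := by nlinarith [(hzt i).2]
  rw [Finset.mem_Icc]
  constructor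
  · exact_mod_cast hlo
  · exact Int.lt_add_one_iff.1 (by exact_mod_cast hhi)

theorem sub_one_mul_lt_of_mem_interiorPoints (hv : ∀ i, 0 < v i) {z : ι → ℤ}
    (hz : z ∈ interiorPoints v) (i j : ι) : (z j - 1) * v i < z i * v j := by
  obtain ⟨t, -, hzt⟩ := hz
  have hvi : (0 : ℝ) < v i := by exact_mod_cast hv i
  have hvj : (0 : ℝ) < v j := by exact_mod_cast hv j
  have hj : (z j : ℝ) - 1 < t * v j := by linarith [(hzt j).2]
  have hi : t * v i < z i := by linarith [(hzt i).1]
  have : ((z j : ℝ) - 1) * v i < z i * v j :=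
    calc ((z j : ℝ) - 1) * v i < t * v j * v i := mul_lt_mul_of_pos_right hj hvi
      _ = t * v i * v j := by ring
      _ < z i * v j := mul_lt_mul_of_pos_right hi hvj
  exact_mod_cast this

variable [Fintype ι]

noncomputable def crossingTimes (v : ι → ℤ) : Finset ℚ :=
  Finset.univ.biUnion fun i => (Finset.Icc 1 (v i)).image fun k : ℤ => (k : ℚ) / v i

noncomputable def minRatio [Nonempty ι] (v z : ι → ℤ) : ℚ :=
  Finset.univ.inf' Finset.univ_nonempty fun i => (z i : ℚ) / v i

theorem mem_crossingTimes {q : ℚ} :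
    q ∈ crossingTimes v ↔ ∃ i, ∃ k ∈ Finset.Icc 1 (v i), (k : ℚ) / v i = q := by
  simp [crossingTimes]

theorem crossingTimes_subset_Ioc : ↑(crossingTimes v) ⊆ Ioc (0 : ℚ) 1 := by
  intro q hq
  obtain ⟨i, k, hk, rfl⟩ := mem_crossingTimes.1 hq
  obtain ⟨hk₁, hkv⟩ := Finset.mem_Icc.1 hk
  have hvi : (0 : ℚ) < v i := by exact_mod_cast hk₁.trans_lt' one_pos |>.trans_le hkv
  exact ⟨div_pos (by exact_mod_cast hk₁) hvi, (div_le_one hvi).2 (by exact_mod_cast hkv)⟩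

theorem ceilPoint_mem_interiorPoints (hv : ∀ i, 0 < v i) {q : ℚ} (hq : q ∈ Ioc 0 1) :
    ceilPoint v q ∈ interiorPoints v := by
  obtain ⟨hq₀, hq₁⟩ := hq
  -- Any time slightly below `q` works: `⌈q * v i⌉ - 1 < q * v i` is an open condition.
  have hnear : ∀ᶠ t in 𝓝 (q : ℝ), 0 ≤ t ∧ ∀ i, (⌈q * v i⌉ : ℝ) - 1 < t * v i := by
    refine (eventually_gt_nhds (by exact_mod_cast hq₀)).mono (fun _ h => h.le) |>.and ?_
    refine Filter.eventually_all.2 fun i => ?_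
    have hceil : (⌈q * v i⌉ : ℝ) - 1 < q * v i := by
      exact_mod_cast sub_lt_iff_lt_add.2 (Int.ceil_lt_add_one (q * v i))
    exact ((continuous_mul_const (v i : ℝ)).tendsto _).eventually_const_lt hceil
  obtain ⟨t, ⟨ht₀, hlt⟩, htq : t < q⟩ :=
    ((hnear.filter_mono nhdsWithin_le_nhds).and (self_mem_nhdsWithin (s := Iio (q : ℝ)))).exists
  have hq₁' : (q : ℝ) ≤ 1 := by exact_mod_cast hq₁
  refine ⟨t, ⟨ht₀, by linarith⟩, fun i => ⟨?_, by simp only [ceilPoint]; linarith [hlt i]⟩⟩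
  have hvi : (0 : ℝ) < v i := by exact_mod_cast hv i
  have hceil : (q : ℝ) * v i ≤ ⌈q * v i⌉ := by exact_mod_cast Int.le_ceil (q * v i)
  simp only [ceilPoint]
  linarith [mul_lt_mul_of_pos_right htq hvi]

section Nonempty

variable [Nonempty ι]

theorem minRatio_le (z : ι → ℤ) (i : ι) : minRatio v z ≤ z i / v i :=
  Finset.inf'_le _ (Finset.mem_univ i)

theorem exists_minRatio_eq (z : ι → ℤ) : ∃ i, minRatio v z = z i / v i := by
  obtain ⟨i, -, h⟩ := Finset.exists_mem_eq_inf' Finset.univ_nonempty fun i => (z i : ℚ) / v i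
  exact ⟨i, h⟩

theorem minRatio_mem_crossingTimes (hv : ∀ i, 0 ≤ v i) {z : ι → ℤ} (hz : z ∈ interiorPoints v) :
    minRatio v z ∈ crossingTimes v := by
  obtain ⟨i, hi⟩ := exists_minRatio_eq (v := v) z
  exact mem_crossingTimes.2 ⟨i, z i, mem_Icc_of_mem_interiorPoints hv hz i, hi.symm⟩

theorem ceilPoint_minRatio (hv : ∀ i, 0 < v i) {z : ι → ℤ} (hz : z ∈ interiorPoints v) :
    ceilPoint v (minRatio v z) = z := by
  funext j
  have hvj : (0 : ℚ) < v j := by exact_mod_cast hv j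
  obtain ⟨i, hi⟩ := exists_minRatio_eq (v := v) z
  have hvi : (0 : ℚ) < v i := by exact_mod_cast hv i
  rw [ceilPoint, Int.ceil_eq_iff]
  constructor
  · rw [hi, div_mul_eq_mul_div, lt_div_iff₀ hvi]
    exact_mod_cast sub_one_mul_lt_of_mem_interiorPoints hv hz i j
  · exact (le_div_iff₀ hvj).1 (minRatio_le z j)

theorem minRatio_ceilPoint (hv : ∀ i, 0 < v i) {q : ℚ} (hq : q ∈ crossingTimes v) :
    minRatio v (ceilPoint v q) = q := by
  obtain ⟨i, k, -, rfl⟩ := mem_crossingTimes.1 hq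
  refine le_antisymm ((minRatio_le _ i).trans_eq ?_) (Finset.le_inf' _ _ fun j _ => ?_)
  · have hvi : (v i : ℚ) ≠ 0 := by exact_mod_cast (hv i).ne'
    simp [ceilPoint, div_mul_cancel₀ _ hvi]
  · exact (le_div_iff₀ (by exact_mod_cast hv j)).2 (Int.le_ceil _)

theorem bijOn_minRatio (hv : ∀ i, 0 < v i) :
    BijOn (minRatio v) (interiorPoints v) (crossingTimes v) :=
  InvOn.bijOn ⟨fun _ hz => ceilPoint_minRatio hv hz, fun _ hq => minRatio_ceilPoint hv hq⟩
    (fun _ hz => minRatio_mem_crossingTimes (fun i => (hv i).le) hz)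
    fun _ hq => ceilPoint_mem_interiorPoints hv (crossingTimes_subset_Ioc hq)

theorem ncard_interiorPoints (hv : ∀ i, 0 < v i) :
    (interiorPoints v).ncard = (crossingTimes v).card := by
  rw [(bijOn_minRatio hv).ncard_eq, ncard_coe_finset]

end Nonempty

theorem le_card_crossingTimes (i : ι) : v i ≤ (crossingTimes v).card := by
  rcases le_or_gt (v i) 0 with hvi | hvi
  · exact hvi.trans (Nat.cast_nonneg _)
  have hinj : Function.Injective fun k : ℤ => (k : ℚ) / v i := fun a b hab => by
    have : (v i : ℚ) ≠ 0 := by exact_mod_cast hvi.ne'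
    simpa [div_left_inj' this] using hab
  have hsub : (Finset.Icc 1 (v i)).image (fun k : ℤ => (k : ℚ) / v i) ⊆ crossingTimes v :=
    Finset.subset_biUnion_of_mem (fun j => (Finset.Icc 1 (v j)).image fun k : ℤ => (k : ℚ) / v j)
      (Finset.mem_univ i)
  have := Finset.card_le_card hsub
  rw [Finset.card_image_of_injective _ hinj, Int.card_Icc] at this
  omega

theorem card_crossingTimes_le (hv : ∀ i, 0 ≤ v i) : ((crossingTimes v).card : ℤ) ≤ ∑ i, v i := by
  have hcard : (crossingTimes v).card ≤ ∑ i, (Finset.Icc 1 (v i)).card :=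
    Finset.card_biUnion_le.trans (Finset.sum_le_sum fun i _ => Finset.card_image_le)
  calc ((crossingTimes v).card : ℤ) ≤ ∑ i, ((Finset.Icc 1 (v i)).card : ℤ) := by
        exact_mod_cast hcard
    _ = ∑ i, v i := Finset.sum_congr rfl fun i _ => by rw [Int.card_Icc]; have := hv i; omega

theorem den_le_of_mem_crossingTimes {q : ℚ} (hq : q ∈ crossingTimes v) :
    ∃ i, (q.den : ℤ) ≤ v i := by
  obtain ⟨i, k, hk, rfl⟩ := mem_crossingTimes.1 hq
  refine ⟨i, Int.le_of_dvd (by linarith [Finset.mem_Icc.1 hk]) ?_⟩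
  simpa [Rat.divInt_eq_div] using Rat.den_dvd k (v i)

theorem card_crossingTimes_le_sum_totient {d : ℕ} (hv : ∀ i, v i ≤ d) :
    (crossingTimes v).card ≤ ∑ ℓ ∈ Finset.Icc 1 d, ℓ.totient :=
  Rat.card_le_sum_totient fun q hq => ⟨crossingTimes_subset_Ioc hq, by
    obtain ⟨i, hi⟩ := den_le_of_mem_crossingTimes hq
    have := hv i
    omega⟩

end LonelyRunner

theorem ncard_setOf_mem_and_isLatticePoint {d : ℕ} (A : Set (Fin d → ℝ)) :
    {x | x ∈ A ∧ IsLatticePoint x}.ncard = {z : Fin d → ℤ | (fun i => (z i : ℝ)) ∈ A}.ncard := by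
  have hinj : Function.Injective fun (z : Fin d → ℤ) (i : Fin d) => (z i : ℝ) :=
    fun a b h => funext fun i => Int.cast_injective (congr_fun h i)
  rw [← Set.ncard_image_of_injective _ hinj]
  congr 1
  ext x
  simp only [IsLatticePoint, Classical.skolem, mem_image, mem_ofPred_eq, funext_iff]
  constructor
  · rintro ⟨hx, z, hz⟩
    exact ⟨z, by convert hx using 1; exact funext fun i => (hz i).symm, fun i => (hz i).symm⟩
  · rintro ⟨z, hz, hzx⟩
    exact ⟨by convert hz using 1; exact funext fun i => (hzx i).symm, z, fun i => (hzx i).symm⟩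

theorem LonelyRunner.ncard_interior_isLatticePoint_eq {d : ℕ} (v : Fin d → ℤ) :
    {x | x ∈ interior ((∑ j : Fin d, segment ℝ (0 : Fin d → ℝ) (Pi.single j 1)) +
      segment ℝ 0 (fun i => (v i : ℝ))) ∧ IsLatticePoint x}.ncard = (interiorPoints v).ncard := by
  rw [ncard_setOf_mem_and_isLatticePoint, interior_sum_segment_single_add_segment]
  rfl

open LonelyRunner in
theorem bounds_num_interior_lattice_points_lrc_zonotope_general
    {d : ℕ} (hd : 2 ≤ d) (n : Fin d → ℤ) (hpos : ∀ i, 0 < n i)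
    (Z : Set (Fin d → ℝ))
    (hZ : Z = (∑ j : Fin d, segment ℝ (0 : Fin d → ℝ) (Pi.single j 1)) +
      segment ℝ (0 : Fin d → ℝ) (fun i => (n i : ℝ)))
    -- the lonely runner zonotope for the canonical velocity vector `ℓ_d = (1,2,…,d)`
    (Zcan : Set (Fin d → ℝ))
    (hZcan : Zcan = (∑ j : Fin d, segment ℝ (0 : Fin d → ℝ) (Pi.single j 1)) +
      segment ℝ (0 : Fin d → ℝ) (fun i => ((i : ℕ) + 1 : ℝ))) :
    (∀ i, n i ≤ ({x | x ∈ interior Z ∧ IsLatticePoint x}.ncard : ℤ)) ∧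
      ({x | x ∈ interior Z ∧ IsLatticePoint x}.ncard : ℤ) ≤ ∑ i, n i ∧
      ((∃ i, (∑ ℓ ∈ Finset.Icc 1 d, ℓ.totient : ℤ) ≤ n i) →
        {x | x ∈ interior Zcan ∧ IsLatticePoint x}.ncard ≤
          {x | x ∈ interior Z ∧ IsLatticePoint x}.ncard) := by
  have : Nonempty (Fin d) := ⟨⟨0, by omega⟩⟩
  set ℓ : Fin d → ℤ := fun i => (i : ℕ) + 1
  have hℓ : (fun i : Fin d => ((i : ℕ) + 1 : ℝ)) = fun i => (ℓ i : ℝ) := by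
    funext i
    simp [ℓ]
  subst hZ hZcan
  rw [hℓ, ncard_interior_isLatticePoint_eq, ncard_interior_isLatticePoint_eq,
    ncard_interiorPoints hpos, ncard_interiorPoints fun i => by positivity]
  refine ⟨le_card_crossingTimes, card_crossingTimes_le fun i => (hpos i).le, ?_⟩
  rintro ⟨i, hi⟩
  have hℓ_le : (crossingTimes ℓ).card ≤ ∑ ℓ ∈ Finset.Icc 1 d, ℓ.totient :=
    card_crossingTimes_le_sum_totient fun i => by simp only [ℓ]; omega
  have := le_card_crossingTimes (v := n) i
  zify at hℓ_le
  omega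

theorem bounds_num_interior_lattice_points_lrc_zonotope
    {d : ℕ} (hd : 2 ≤ d) (n : Fin d → ℤ) (hpos : ∀ i, 0 < n i)
    (hdist : Function.Injective n) (hgcd : Finset.univ.gcd n = 1)
    (Z : Set (Fin d → ℝ))
    (hZ : Z = (∑ j : Fin d, segment ℝ (0 : Fin d → ℝ) (Pi.single j 1)) +
      segment ℝ (0 : Fin d → ℝ) (fun i => (n i : ℝ)))
    -- the lonely runner zonotope for the canonical velocity vector `ℓ_d = (1,2,…,d)`
    (Zcan : Set (Fin d → ℝ))
    (hZcan : Zcan = (∑ j : Fin d, segment ℝ (0 : Fin d → ℝ) (Pi.single j 1)) +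
      segment ℝ (0 : Fin d → ℝ) (fun i => ((i : ℕ) + 1 : ℝ))) :
    (∀ i, n i ≤ ({x | x ∈ interior Z ∧ IsLatticePoint x}.ncard : ℤ)) ∧
      ({x | x ∈ interior Z ∧ IsLatticePoint x}.ncard : ℤ) ≤ ∑ i, n i ∧
      ((∃ i, (∑ ℓ ∈ Finset.Icc 1 d, ℓ.totient : ℤ) ≤ n i) →
        {x | x ∈ interior Zcan ∧ IsLatticePoint x}.ncard ≤
          {x | x ∈ interior Z ∧ IsLatticePoint x}.ncard) :=
  bounds_num_interior_lattice_points_lrc_zonotope_general hd n hpos Z hZ Zcan hZcan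
end

section
/- For every d ∈ ℕ, the all-ones vector 𝟙 is an interior point of the lonely runner zonotope Z_{ℓ_d} associated with ℓ_d = (1,2,...,d), and ca(Z_{ℓ_d}, 𝟙) = d. -/
open Pointwise

/-- The coefficient of asymmetry of a point `w` in a convex set `K`:
`ca(K,w) = min{λ ≥ 1 : w − K ⊆ λ(K − w)}`. -/
noncomputable def ca {E : Type*} [AddCommGroup E] [Module ℝ E] (K : Set E) (w : E) : ℝ :=
  sInf {l : ℝ | 1 ≤ l ∧ ({w} : Set E) - K ⊆ l • (K - {w})}

lemma seg_coord {d : ℕ} {j : Fin d} {y : Fin d → ℝ}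
    (hy : y ∈ segment ℝ (0 : Fin d → ℝ) (Pi.single j 1)) :
    (∀ i, i ≠ j → y i = 0) ∧ y j ∈ Set.Icc (0:ℝ) 1 := by
  rw [segment_eq_image] at hy
  obtain ⟨θ, hθ, rfl⟩ := hy
  constructor
  · intro i hij
    simp [Pi.single_apply, hij]
  · simpa using hθ

lemma memZ {d : ℕ} (x : Fin d → ℝ) :
    x ∈ (∑ j : Fin d, segment ℝ (0 : Fin d → ℝ) (Pi.single j 1)) +
      segment ℝ (0 : Fin d → ℝ) (fun i => ((i : ℕ) + 1 : ℝ)) ↔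
    ∃ s : ℝ, s ∈ Set.Icc (0:ℝ) 1 ∧
      ∀ i : Fin d, x i - s * ((i : ℕ) + 1) ∈ Set.Icc (0:ℝ) 1 := by
  constructor
  · rintro ⟨a, ha, b, hb, rfl⟩
    rw [segment_eq_image] at hb
    obtain ⟨s, hs, rfl⟩ := hb
    refine ⟨s, by simpa using hs, fun i => ?_⟩
    rw [Set.mem_fintype_sum] at ha
    obtain ⟨g, hg, rfl⟩ := ha
    have key : (∑ j, g j) i = g i i := by
      rw [Finset.sum_apply]
      exact Finset.sum_eq_single i (fun j _ hj => (seg_coord (hg j)).1 i (Ne.symm hj))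
        (by simp)
    have heq : ((∑ j, g j) + ((1 - s) • (0 : Fin d → ℝ) +
        s • (fun i => ((i : ℕ) + 1 : ℝ) : Fin d → ℝ))) i - s * ((i:ℕ)+1) = g i i := by
      simp [key]
    rw [heq]
    exact (seg_coord (hg i)).2
  · rintro ⟨s, hs, ht⟩
    refine ⟨fun i => x i - s * ((i:ℕ)+1), ?_,
      s • (fun i => ((i : ℕ) + 1 : ℝ) : Fin d → ℝ), ?_, ?_⟩
    · rw [Set.mem_fintype_sum]
      refine ⟨fun j => Pi.single j (x j - s * ((j:ℕ)+1)), fun j => ?_, ?_⟩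
      · rw [segment_eq_image]
        refine ⟨x j - s * ((j:ℕ)+1), ht j, ?_⟩
        funext k
        by_cases h : k = j <;> simp [Pi.single_apply, h]
      · exact Finset.univ_sum_single _
    · rw [segment_eq_image]
      exact ⟨s, hs, by simp⟩
    · funext i; simp

theorem ca_all_ones_canonical_lonely_runner_zonotope
    {d : ℕ} (hd : 1 ≤ d)
    (Z : Set (Fin d → ℝ))
    (hZ : Z = (∑ j : Fin d, segment ℝ (0 : Fin d → ℝ) (Pi.single j 1)) +
      segment ℝ (0 : Fin d → ℝ) (fun i => ((i : ℕ) + 1 : ℝ))) :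
    (1 : Fin d → ℝ) ∈ interior Z ∧ ca Z (1 : Fin d → ℝ) = (d : ℝ) := by
  have hd1 : (1:ℝ) ≤ (d:ℝ) := by exact_mod_cast hd
  have hd0 : (0:ℝ) < (d:ℝ) := by linarith
  have hmem : ∀ x : Fin d → ℝ, x ∈ Z ↔ ∃ s : ℝ, s ∈ Set.Icc (0:ℝ) 1 ∧
      ∀ i : Fin d, x i - s * ((i : ℕ) + 1) ∈ Set.Icc (0:ℝ) 1 := by
    intro x; rw [hZ]; exact memZ x
  have hcard : ∀ i : Fin d, ((i:ℕ):ℝ) + 1 ≤ (d:ℝ) := by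
    intro i
    have : (i:ℕ) + 1 ≤ d := i.2
    exact_mod_cast this
  have hone : ∀ i : Fin d, (1:ℝ) ≤ ((i:ℕ):ℝ) + 1 := by
    intro i; have := Nat.cast_nonneg (α := ℝ) (i:ℕ); linarith
  constructor
  · -- interior
    rw [mem_interior_iff_mem_nhds, Metric.mem_nhds_iff]
    refine ⟨1/(2*d), by positivity, fun x hx => ?_⟩
    rw [Metric.mem_ball, dist_pi_lt_iff (by positivity)] at hx
    rw [hmem]
    have hc2 : 1/(2*(d:ℝ)) ≤ 1/2 := by
      rw [div_le_div_iff₀ (by positivity) (by norm_num)]; linarith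
    refine ⟨1/(2*d), ⟨by positivity, by linarith⟩, fun i => ?_⟩
    have hxi := hx i
    rw [Real.dist_eq] at hxi
    have h1 : |x i - 1| < 1/(2*d) := by simpa using hxi
    rw [abs_lt] at h1
    have h2 := hcard i
    have h3 := hone i
    have e1 : 1/(2*(d:ℝ)) * (((i:ℕ):ℝ)+1) ≤ 1/2 := by
      have : 1/(2*(d:ℝ)) * (((i:ℕ):ℝ)+1) ≤ 1/(2*(d:ℝ)) * (d:ℝ) := by
        gcongr
      have e2 : 1/(2*(d:ℝ)) * (d:ℝ) = 1/2 := by field_simp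
      linarith
    have e3 : 1/(2*(d:ℝ)) ≤ 1/(2*(d:ℝ)) * (((i:ℕ):ℝ)+1) := by
      nlinarith [one_div_pos.2 (show (0:ℝ) < 2*(d:ℝ) by positivity)]
    constructor
    · linarith [h1.1]
    · linarith [h1.2]
  · -- ca = d
    have hdS : (d:ℝ) ∈ {l : ℝ | 1 ≤ l ∧ ({(1:Fin d → ℝ)} : Set (Fin d → ℝ)) - Z ⊆
        l • (Z - {(1:Fin d → ℝ)})} := by
      refine ⟨hd1, ?_⟩
      rintro y hy
      rw [Set.singleton_sub] at hy
      obtain ⟨z, hz, rfl⟩ := hy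
      obtain ⟨s, hs, ht⟩ := (hmem z).1 hz
      refine ⟨(d:ℝ)⁻¹ • (1 - z), ?_, smul_inv_smul₀ (ne_of_gt hd0) _⟩
      rw [Set.sub_singleton]
      refine ⟨1 + (d:ℝ)⁻¹ • (1 - z), ?_, add_sub_cancel_left 1 _⟩
      rw [hmem]
      refine ⟨(1-s)/d, ⟨div_nonneg (by linarith [hs.2]) hd0.le, ?_⟩, fun i => ?_⟩
      · rw [div_le_one hd0]; linarith [hs.1]
      · have h2 := hcard i
        have h3 := hone i
        obtain ⟨hta, htb⟩ := ht i
        have expand : (1 + (d:ℝ)⁻¹ • (1 - z)) i - (1-s)/d * (((i:ℕ):ℝ)+1)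
            = 1 + (1 - (z i - s*(((i:ℕ):ℝ)+1)))/d - (((i:ℕ):ℝ)+1)/d := by
          simp only [Pi.add_apply, Pi.smul_apply, Pi.sub_apply, Pi.one_apply, smul_eq_mul]
          field_simp
          ring
        rw [expand]
        constructor
        · have e1 : (((i:ℕ):ℝ)+1)/d ≤ 1 := by rw [div_le_one hd0]; exact h2
          have e2 : (0:ℝ) ≤ (1 - (z i - s*(((i:ℕ):ℝ)+1)))/d :=
            div_nonneg (by linarith) hd0.le
          linarith
        · have e1 : 1/(d:ℝ) ≤ (((i:ℕ):ℝ)+1)/d := by gcongr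
          have e2 : (1 - (z i - s*(((i:ℕ):ℝ)+1)))/d ≤ 1/d := by gcongr; linarith
          linarith
    have hlb : ∀ l ∈ {l : ℝ | 1 ≤ l ∧ ({(1:Fin d → ℝ)} : Set (Fin d → ℝ)) - Z ⊆
        l • (Z - {(1:Fin d → ℝ)})}, (d:ℝ) ≤ l := by
      rintro l ⟨hl1, hl⟩
      have hl0 : (0:ℝ) < l := by linarith
      have hz0 : (fun i => 1 + (((i:ℕ):ℝ)+1) : Fin d → ℝ) ∈ Z := by
        rw [hmem]
        exact ⟨1, ⟨zero_le_one, le_refl 1⟩, fun i => by norm_num⟩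
      have hy : (fun i => -(((i:ℕ):ℝ)+1) : Fin d → ℝ) ∈
          ({(1:Fin d → ℝ)} : Set (Fin d → ℝ)) - Z := by
        rw [Set.singleton_sub]
        refine ⟨_, hz0, ?_⟩
        funext i; simp
      obtain ⟨u, hu, huy⟩ := hl hy
      rw [Set.sub_singleton] at hu
      obtain ⟨w, hw, rfl⟩ := hu
      obtain ⟨s, hs, ht⟩ := (hmem w).1 hw
      have hlast : ∃ i : Fin d, ((i:ℕ):ℝ) + 1 = (d:ℝ) := by
        refine ⟨⟨d-1, by omega⟩, ?_⟩
        have h : d - 1 + 1 = d := by omega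
        exact_mod_cast congrArg (Nat.cast : ℕ → ℝ) h
      obtain ⟨i, hi⟩ := hlast
      have hcf := congrFun huy i
      simp only [Pi.smul_apply, Pi.sub_apply, Pi.one_apply, smul_eq_mul] at hcf
      -- hcf : l * (w i - 1) = -(((i:ℕ):ℝ)+1)
      rw [hi] at hcf
      have hwi : w i = 1 - (d:ℝ)/l := by
        field_simp
        linarith
      have hti := (ht i).1
      rw [hwi, hi] at hti
      have hsd : 0 ≤ s * (d:ℝ) := mul_nonneg hs.1 hd0.le
      have hdl : (d:ℝ)/l ≤ 1 := by linarith
      rw [div_le_one hl0] at hdl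
      exact hdl
    unfold ca
    apply le_antisymm
    · exact csInf_le ⟨(d:ℝ), hlb⟩ hdS
    · exact le_csInf ⟨(d:ℝ), hdS⟩ hlb
end
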